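/- (Kerckhoff's estimate.) For every T > 0, every q ∈ ℝ₊^𝒜, every α ∈ 𝒜 and every π ∈ ℜ, P_q( γ ∈ Γ_α(π) and (B_γ·q)_α > T·q_α | π ) < T^{−1}, where Γ_α(π) denotes the set of paths starting at π in which α is not the winner of any arrow. -/

import Mathlib

open scoped BigOperators
open Matrix

/-- A permutation pair: two bijections from the alphabet onto `Fin d`
(positions are 0-based; "position k" in 1-based terms corresponds to value `k-1`). -/
structure PermPair (A : Type) [Fintype A] where
  top : A ≃ Fin (Fintype.card A)
  bot : A ≃ Fin (Fintype.card A)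

namespace Rauzy

variable {A : Type} [Fintype A] [DecidableEq A]

/-- Irreducibility of a permutation pair. -/
def Irreducible (π : PermPair A) : Prop :=
  ∀ k : ℕ, 0 < k → k < Fintype.card A →
    {a : A | (π.top a : ℕ) < k} ≠ {a : A | (π.bot a : ℕ) < k}

/-- The top operation of Rauzy induction, with its winner and loser. -/
def IsTopStep (π π' : PermPair A) (w l : A) : Prop :=
  (π.top w : ℕ) = Fintype.card A - 1 ∧
  (π.bot l : ℕ) = Fintype.card A - 1 ∧
  π'.top = π.top ∧
  ((π'.bot l : ℕ) = (π.bot w : ℕ) + 1) ∧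
  ∀ ξ : A, ξ ≠ l →
    (π'.bot ξ : ℕ) =
      if (π.bot ξ : ℕ) ≤ (π.bot w : ℕ) then (π.bot ξ : ℕ) else (π.bot ξ : ℕ) + 1

/-- The bottom operation of Rauzy induction, with its winner and loser. -/
def IsBottomStep (π π' : PermPair A) (w l : A) : Prop :=
  (π.bot w : ℕ) = Fintype.card A - 1 ∧
  (π.top l : ℕ) = Fintype.card A - 1 ∧
  π'.bot = π.bot ∧
  ((π'.top l : ℕ) = (π.top w : ℕ) + 1) ∧
  ∀ ξ : A, ξ ≠ l →
    (π'.top ξ : ℕ) =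
      if (π.top ξ : ℕ) ≤ (π.top w : ℕ) then (π.top ξ : ℕ) else (π.top ξ : ℕ) + 1

/-- One step (arrow) of the Rauzy diagram. -/
def IsStep (π π' : PermPair A) (w l : A) : Prop :=
  IsTopStep π π' w l ∨ IsBottomStep π π' w l

/-- A Rauzy class: a minimal nonempty set of irreducible permutation pairs
invariant under both Rauzy operations. -/
def IsRauzyClass (R : Set (PermPair A)) : Prop :=
  R.Nonempty ∧ (∀ π ∈ R, Irreducible π) ∧
  (∀ π ∈ R, ∀ π' w l, IsStep π π' w l → π' ∈ R) ∧
  ∀ R' : Set (PermPair A), R' ⊆ R → R'.Nonempty →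
    (∀ π ∈ R', ∀ π' w l, IsStep π π' w l → π' ∈ R') → R' = R

/-- An arrow of the Rauzy diagram (datum). -/
structure Arrow (A : Type) [Fintype A] where
  src : PermPair A
  dst : PermPair A
  winner : A
  loser : A

/-- Validity of an arrow. -/
def Arrow.Valid (a : Arrow A) : Prop := IsStep a.src a.dst a.winner a.loser

/-- The arrows form a chain of valid arrows starting at the given vertex. -/
def ChainFrom : PermPair A → List (Arrow A) → Prop
  | _, [] => True
  | π, a :: rest => a.src = π ∧ a.Valid ∧ ChainFrom a.dst rest

/-- A path in the Rauzy diagram: a start vertex and a list of arrows.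
Trivial paths (empty arrow lists) are identified with vertices. -/
structure RPath (A : Type) [Fintype A] where
  start : PermPair A
  arrows : List (Arrow A)

/-- The endpoint of a path. -/
def RPath.endp (p : RPath A) : PermPair A :=
  p.arrows.foldl (fun _ a => a.dst) p.start

/-- A path belongs to `Π(ℜ)`. -/
def RPath.IsValid (R : Set (PermPair A)) (p : RPath A) : Prop :=
  p.start ∈ R ∧ ChainFrom p.start p.arrows

/-- The matrix `B_γ` of an arrow: `B_γ · e_ξ = e_ξ` for `ξ ≠ winner` and
`B_γ · e_winner = e_winner + e_loser`. -/
noncomputable def arrowMatrix (a : Arrow A) : Matrix A A ℝ :=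
  1 + Matrix.single a.loser a.winner 1

/-- The matrix `B_γ` of a path, with `B_{γ₁γ₂} = B_{γ₂} · B_{γ₁}`. -/
noncomputable def pathMatrix (p : RPath A) : Matrix A A ℝ :=
  p.arrows.foldl (fun M a => arrowMatrix a * M) 1

/-- `Λ_q = {λ ∈ ℝ₊^𝒜 : ⟨λ, q⟩ < 1}`. -/
def Lambda (q : A → ℝ) : Set (A → ℝ) :=
  {l | (∀ a, 0 < l a) ∧ ∑ a, l a * q a < 1}

/-- `Λ_{q,γ} = B_γ^* · Λ_{B_γ · q}`. -/
noncomputable def lamSet (q : A → ℝ) (p : RPath A) : Set (A → ℝ) :=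
  (fun l => (pathMatrix p)ᵀ.mulVec l) '' Lambda ((pathMatrix p).mulVec q)

/-- `Leb(∪_{γ ∈ Γ} Λ_{q,γ}) / Leb(Λ_q)`. -/
noncomputable def famProb (q : A → ℝ) (Γ : Set (RPath A)) : ℝ :=
  (MeasureTheory.volume (⋃ p ∈ Γ, lamSet q p)).toReal /
    (MeasureTheory.volume (Lambda q)).toReal

/-- `P_q(𝒫 | π)`: the relative Lebesgue measure of the union of the `Λ_{q,γ}`
over paths `γ ∈ Π(ℜ)` starting at `π` and satisfying `𝒫`. -/
noncomputable def pathProb (R : Set (PermPair A)) (q : A → ℝ) (π : PermPair A)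
    (P : RPath A → Prop) : ℝ :=
  famProb q {p : RPath A | p.IsValid R ∧ p.start = π ∧ P p}

/-- `M_{𝒜'}(q) = max_{α ∈ 𝒜'} q_α`. -/
noncomputable def bigM (S : Finset A) (q : A → ℝ) : ℝ :=
  if h : S.Nonempty then S.sup' h q else 0

/-- `M(q) = max_{α ∈ 𝒜} q_α`. -/
noncomputable def MM (q : A → ℝ) : ℝ := bigM Finset.univ q

/-- `m(q) = min_{α ∈ 𝒜} q_α`. -/
noncomputable def littleM (q : A → ℝ) : ℝ :=
  if h : (Finset.univ : Finset A).Nonempty then Finset.univ.inf' h q else 0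

/-- A path is complete if every letter wins in at least one of its arrows. -/
def RPath.Complete (p : RPath A) : Prop :=
  ∀ a : A, ∃ arr ∈ p.arrows, arr.winner = a

/-- A path is `k`-complete if it is a concatenation of `k` complete paths. -/
def RPath.KComplete (p : RPath A) (k : ℕ) : Prop :=
  ∃ L : List (List (Arrow A)), L.length = k ∧ L.flatten = p.arrows ∧
    ∀ seg ∈ L, ∀ a : A, ∃ arr ∈ seg, arr.winner = a

/-- A path is positive if all entries of its matrix are positive. -/
def RPath.Positive (p : RPath A) : Prop :=
  ∀ x y : A, 0 < pathMatrix p x y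

/-- The cone `Θ_π`. -/
def Theta (π : PermPair A) : Set (A → ℝ) :=
  {τ | ∀ k : ℕ, 0 < k → k < Fintype.card A →
     (0 < ∑ ξ ∈ Finset.univ.filter (fun ξ => (π.top ξ : ℕ) < k), τ ξ) ∧
     (∑ ξ ∈ Finset.univ.filter (fun ξ => (π.bot ξ : ℕ) < k), τ ξ < 0)}

end Rauzy

/-!
Splitting paths by their first arrow, the (at most two) arrows leaving a vertex cut `Λ_q` into
the pieces `B_γ^* Λ_{B_γ q}` of relative measures `q_l / (q_l + q_w)` and `q_w / (q_w + q_l)`.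
Hence the bound `(q_α / C) · Leb(Λ_q)` for the measure of the points whose path (with `α` never
winning) pushes the `α`-coordinate above `C` is inherited from the two branches: if `α` does not
lose, `q_α` is unchanged and the two pieces add up to `Λ_q`; if `α` loses, the growth of `q_α`
exactly compensates the shrinking of `Λ`. Induction on the length of paths, with `C = T q_α`,
gives `P ≤ T⁻¹`. The inequality is strict because the values `(B_γ q)_α` lie in the discrete set
`ℕ`-span of the `q_a`, so `C` can be raised slightly above `T q_α` without losing paths.
-/

/-- `IsBottomStep π π' w l` is definitionally `IsTopStep π.swap π'.swap w l`. -/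
def PermPair.swap {A : Type} [Fintype A] (π : PermPair A) : PermPair A := ⟨π.bot, π.top⟩

lemma PermPair.ext {A : Type} [Fintype A] {π π' : PermPair A} (ht : π.top = π'.top)
    (hb : π.bot = π'.bot) : π = π' := by
  cases π; cases π'; congr

namespace Rauzy

open MeasureTheory Filter Topology
open scoped ENNReal

variable {A : Type} [Fintype A]

section Steps

variable {π π₁ π₂ : PermPair A} {w₁ l₁ w₂ l₂ : A}

lemma IsStep.winner_ne_loser (h : IsStep π π₁ w₁ l₁) : w₁ ≠ l₁ := by
  rintro rfl
  rcases h with ⟨-, hl, -, hl', -⟩ | ⟨-, hl, -, hl', -⟩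
  · have := (π₁.bot w₁).isLt; omega
  · have := (π₁.top w₁).isLt; omega

lemma IsTopStep.unique (h₁ : IsTopStep π π₁ w₁ l₁) (h₂ : IsTopStep π π₂ w₂ l₂) :
    w₁ = w₂ ∧ l₁ = l₂ ∧ π₁ = π₂ := by
  obtain ⟨hw₁, hl₁, ht₁, hb₁, hξ₁⟩ := h₁
  obtain ⟨hw₂, hl₂, ht₂, hb₂, hξ₂⟩ := h₂
  obtain rfl : w₁ = w₂ := π.top.injective (Fin.ext (hw₁.trans hw₂.symm))
  obtain rfl : l₁ = l₂ := π.bot.injective (Fin.ext (hl₁.trans hl₂.symm))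
  refine ⟨rfl, rfl, PermPair.ext (ht₁.trans ht₂.symm) (Equiv.ext fun ξ => Fin.ext ?_)⟩
  by_cases hξ : ξ = l₁
  · rw [hξ, hb₁, hb₂]
  · rw [hξ₁ ξ hξ, hξ₂ ξ hξ]

lemma IsBottomStep.unique (h₁ : IsBottomStep π π₁ w₁ l₁) (h₂ : IsBottomStep π π₂ w₂ l₂) :
    w₁ = w₂ ∧ l₁ = l₂ ∧ π₁ = π₂ := by
  obtain ⟨hw, hl, hπ⟩ := IsTopStep.unique (π := π.swap) (π₁ := π₁.swap) (π₂ := π₂.swap) h₁ h₂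
  exact ⟨hw, hl, congrArg PermPair.swap hπ⟩

lemma IsTopStep.winner_eq_loser_and_loser_eq_winner (h₁ : IsTopStep π π₁ w₁ l₁)
    (h₂ : IsBottomStep π π₂ w₂ l₂) : w₁ = l₂ ∧ l₁ = w₂ :=
  ⟨π.top.injective (Fin.ext (h₁.1.trans h₂.2.1.symm)),
    π.bot.injective (Fin.ext (h₁.2.1.trans h₂.1.symm))⟩

end Steps

def topArrows (π : PermPair A) : Set (Arrow A) :=
  {a | a.src = π ∧ IsTopStep π a.dst a.winner a.loser}

def bottomArrows (π : PermPair A) : Set (Arrow A) :=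
  {a | a.src = π ∧ IsBottomStep π a.dst a.winner a.loser}

lemma topArrows_subsingleton (π : PermPair A) : (topArrows π).Subsingleton := by
  rintro ⟨s, d, w, l⟩ ⟨hs, h⟩ ⟨s', d', w', l'⟩ ⟨hs', h'⟩
  obtain ⟨hw, hl, hd⟩ := IsTopStep.unique h h'
  congr
  exact hs.trans hs'.symm

lemma bottomArrows_subsingleton (π : PermPair A) : (bottomArrows π).Subsingleton := by
  rintro ⟨s, d, w, l⟩ ⟨hs, h⟩ ⟨s', d', w', l'⟩ ⟨hs', h'⟩
  obtain ⟨hw, hl, hd⟩ := IsBottomStep.unique h h'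
  congr
  exact hs.trans hs'.symm

lemma lambda_subset_Icc {q : A → ℝ} (hq : ∀ a, 0 < q a) :
    Lambda q ⊆ Set.Icc 0 fun a => (q a)⁻¹ := by
  rintro l ⟨hpos, hsum⟩
  refine ⟨fun a => (hpos a).le, fun a => ?_⟩
  show l a ≤ (q a)⁻¹
  rw [← one_div, le_div_iff₀ (hq a)]
  calc l a * q a ≤ ∑ b, l b * q b :=
        Finset.single_le_sum (fun b _ => (mul_pos (hpos b) (hq b)).le) (Finset.mem_univ a)
    _ ≤ 1 := hsum.le

lemma volume_lambda_lt_top {q : A → ℝ} (hq : ∀ a, 0 < q a) : volume (Lambda q) < ∞ :=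
  (measure_mono (lambda_subset_Icc hq)).trans_lt measure_Icc_lt_top

lemma volume_lambda_eq_mul [DecidableEq A] {q q' : A → ℝ} (hq : ∀ a, 0 < q a)
    (hq' : ∀ a, 0 < q' a) :
    volume (Lambda q') = ENNReal.ofReal (∏ a, q a / q' a) * volume (Lambda q) := by
  set D := Matrix.toLin' (Matrix.diagonal fun a => q' a / q a)
  have hdet : LinearMap.det D = ∏ a, q' a / q a := by
    rw [LinearMap.det_toLin', Matrix.det_diagonal]
  have hdet_pos : 0 < ∏ a, q' a / q a := Finset.prod_pos fun a _ => div_pos (hq' a) (hq a)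
  have hpre : Lambda q' = D ⁻¹' Lambda q := by
    ext l
    have hsum : ∑ a, q' a / q a * l a * q a = ∑ a, l a * q' a :=
      Finset.sum_congr rfl fun a _ => by field_simp [(hq a).ne']
    simp only [Lambda, D, Set.mem_preimage, Set.mem_ofPred_eq, Matrix.toLin'_apply,
      Matrix.mulVec_diagonal, hsum]
    exact and_congr_left' (forall_congr' fun a =>
      (mul_pos_iff_of_pos_left (div_pos (hq' a) (hq a))).symm)
  rw [hpre, Measure.addHaar_preimage_linearMap _ (hdet ▸ hdet_pos.ne'), hdet,
    abs_of_pos (inv_pos.2 hdet_pos), ← Finset.prod_inv_distrib]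
  simp_rw [inv_div]

section Matrices

variable [DecidableEq A]

lemma foldl_arrowMatrix_mul (π : PermPair A) (L : List (Arrow A)) (M : Matrix A A ℝ) :
    L.foldl (fun M a => arrowMatrix a * M) M = pathMatrix ⟨π, L⟩ * M := by
  induction L generalizing M with
  | nil => exact (one_mul M).symm
  | cons a L ih =>
    rw [List.foldl_cons, ih]
    change _ = List.foldl _ (arrowMatrix a * 1) L * M
    rw [ih, mul_one, mul_assoc]

lemma pathMatrix_cons (π π' : PermPair A) (a : Arrow A) (L : List (Arrow A)) :
    pathMatrix ⟨π, a :: L⟩ = pathMatrix ⟨π', L⟩ * arrowMatrix a := by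
  rw [pathMatrix, List.foldl_cons, foldl_arrowMatrix_mul π', mul_one]

lemma arrowMatrix_mulVec_apply (a : Arrow A) (v : A → ℝ) (x : A) :
    (arrowMatrix a *ᵥ v) x = v x + if x = a.loser then v a.winner else 0 := by
  rw [arrowMatrix, Matrix.add_mulVec, Matrix.one_mulVec]
  simp [Matrix.single_mulVec, Function.update_apply]

lemma transpose_arrowMatrix_mulVec_apply (a : Arrow A) (v : A → ℝ) (x : A) :
    ((arrowMatrix a)ᵀ *ᵥ v) x = v x + if x = a.winner then v a.loser else 0 := by
  rw [arrowMatrix, Matrix.transpose_add, Matrix.transpose_one, Matrix.transpose_single,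
    Matrix.add_mulVec, Matrix.one_mulVec]
  simp [Matrix.single_mulVec, Function.update_apply]

lemma arrowMatrix_mulVec_pos (a : Arrow A) {v : A → ℝ} (hv : ∀ x, 0 < v x) (x : A) :
    0 < (arrowMatrix a *ᵥ v) x := by
  rw [arrowMatrix_mulVec_apply]
  have := hv x
  have := hv a.winner
  split_ifs <;> linarith

lemma det_arrowMatrix {a : Arrow A} (h : a.winner ≠ a.loser) : (arrowMatrix a).det = 1 :=
  Matrix.det_transvection_of_ne _ _ h.symm 1

lemma pathMatrix_mulVec_mem_span (p : RPath A) {q v : A → ℝ}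
    (hv : ∀ x, v x ∈ Submodule.span ℕ (Set.range q)) (x : A) :
    (pathMatrix p *ᵥ v) x ∈ Submodule.span ℕ (Set.range q) := by
  obtain ⟨π, L⟩ := p
  induction L generalizing v with
  | nil => simpa [pathMatrix] using hv x
  | cons a L ih =>
    rw [pathMatrix_cons π π, ← Matrix.mulVec_mulVec]
    refine ih fun y => ?_
    rw [arrowMatrix_mulVec_apply]
    split_ifs
    · exact add_mem (hv y) (hv a.winner)
    · simpa using hv y

end Matrices

section Branches

variable [DecidableEq A]

lemma volume_image_transpose_arrowMatrix {a : Arrow A} (h : a.winner ≠ a.loser)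
    (s : Set (A → ℝ)) : volume ((fun v => (arrowMatrix a)ᵀ *ᵥ v) '' s) = volume s := by
  rw [show (fun v => (arrowMatrix a)ᵀ *ᵥ v) = Matrix.toLin' (arrowMatrix a)ᵀ from rfl,
    Measure.addHaar_image_linearMap, LinearMap.det_toLin', Matrix.det_transpose,
    det_arrowMatrix h]
  simp

lemma volume_lambda_arrowMatrix_mulVec (a : Arrow A) {q : A → ℝ} (hq : ∀ x, 0 < q x) :
    volume (Lambda (arrowMatrix a *ᵥ q)) =
      ENNReal.ofReal (q a.loser / (q a.loser + q a.winner)) * volume (Lambda q) := by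
  rw [volume_lambda_eq_mul hq (arrowMatrix_mulVec_pos a hq), Finset.prod_eq_single a.loser]
  · simp [arrowMatrix_mulVec_apply]
  · intro x _ hx
    simp [arrowMatrix_mulVec_apply, hx, (hq x).ne']
  · simp

lemma volume_lambda_top_add_bottom {t b : Arrow A} (hw : t.winner = b.loser)
    (hl : t.loser = b.winner) {q : A → ℝ} (hq : ∀ x, 0 < q x) :
    volume (Lambda (arrowMatrix t *ᵥ q)) + volume (Lambda (arrowMatrix b *ᵥ q)) =
      volume (Lambda q) := by
  have := hq t.loser
  have := hq t.winner
  rw [volume_lambda_arrowMatrix_mulVec t hq, volume_lambda_arrowMatrix_mulVec b hq, ← add_mul,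
    ← hw, ← hl, ← ENNReal.ofReal_add (by positivity) (by positivity), add_comm (q t.winner),
    ← add_div, div_self (by positivity), ENNReal.ofReal_one, one_mul]

lemma transpose_arrowMatrix_image_lambda_subset (a : Arrow A) (q : A → ℝ) :
    (fun v => (arrowMatrix a)ᵀ *ᵥ v) '' Lambda (arrowMatrix a *ᵥ q) ⊆ Lambda q := by
  rintro _ ⟨μ, ⟨hμ, hsum⟩, rfl⟩
  refine ⟨fun x => ?_, ?_⟩
  · dsimp only
    rw [transpose_arrowMatrix_mulVec_apply]
    have := hμ x
    have := hμ a.loser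
    split_ifs <;> linarith
  · change ((arrowMatrix a)ᵀ *ᵥ μ) ⬝ᵥ q < 1
    rwa [Matrix.mulVec_transpose, ← Matrix.dotProduct_mulVec]

lemma lamSet_cons (q : A → ℝ) (π π' : PermPair A) (a : Arrow A) (L : List (Arrow A)) :
    lamSet q ⟨π, a :: L⟩ =
      (fun v => (arrowMatrix a)ᵀ *ᵥ v) '' lamSet (arrowMatrix a *ᵥ q) ⟨π', L⟩ := by
  simp only [lamSet, Set.image_image, pathMatrix_cons π π', Matrix.transpose_mul,
    Matrix.mulVec_mulVec]

lemma lamSet_subset_lambda (q : A → ℝ) (p : RPath A) :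
    lamSet q p ⊆ Lambda q := by
  obtain ⟨π, L⟩ := p
  induction L generalizing q with
  | nil => simp [lamSet, pathMatrix]
  | cons a L ih =>
    rw [lamSet_cons q π π]
    exact (Set.image_mono (ih _)).trans (transpose_arrowMatrix_image_lambda_subset a q)

end Branches

lemma measure_biUnion_union_biUnion_le {ι X : Type*} [MeasurableSpace X] (μ : Measure X)
    {s t : Set ι} (hs : s.Subsingleton) (ht : t.Subsingleton) {f : ι → Set X} {c : ℝ≥0∞}
    (hf : ∀ i ∈ s ∪ t, μ (f i) ≤ c) (hst : ∀ i ∈ s, ∀ j ∈ t, μ (f i) + μ (f j) ≤ c) :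
    μ ((⋃ i ∈ s, f i) ∪ ⋃ j ∈ t, f j) ≤ c := by
  rcases hs.eq_empty_or_singleton with rfl | ⟨i, rfl⟩ <;>
    rcases ht.eq_empty_or_singleton with rfl | ⟨j, rfl⟩
  · simp
  · simpa using hf j (by simp)
  · simpa using hf i (by simp)
  · simpa using (measure_union_le _ _).trans (hst i rfl j rfl)

section Exceed

variable [DecidableEq A] {C : ℝ} {α : A}

noncomputable def exceedBound (C : ℝ) (α : A) (q : A → ℝ) : ℝ≥0∞ :=
  ENNReal.ofReal (q α / C) * volume (Lambda q)

lemma exceedBound_arrowMatrix_mulVec_le (hC : 0 ≤ C) (a : Arrow A) {q : A → ℝ}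
    (hq : ∀ x, 0 < q x) : exceedBound C α (arrowMatrix a *ᵥ q) ≤ exceedBound C α q := by
  have hgrowth : (arrowMatrix a *ᵥ q) α * (q a.loser / (q a.loser + q a.winner)) ≤ q α := by
    have := hq a.winner
    rw [arrowMatrix_mulVec_apply]
    split_ifs with hα
    · rw [← hα, mul_div_left_comm, div_self (by linarith [hq α]), mul_one]
    · rw [add_zero]
      exact mul_le_of_le_one_right (hq α).le
        (div_le_one_of_le₀ (by linarith [hq a.loser]) (by linarith [hq a.loser]))
  rw [exceedBound, exceedBound, volume_lambda_arrowMatrix_mulVec a hq, ← mul_assoc,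
    ← ENNReal.ofReal_mul (div_nonneg (arrowMatrix_mulVec_pos a hq α).le hC),
    div_mul_eq_mul_div]
  gcongr

lemma exceedBound_top_add_bottom {π : PermPair A} {t b : Arrow A} (ht : t ∈ topArrows π)
    (hb : b ∈ bottomArrows π) (htα : t.winner ≠ α) (hbα : b.winner ≠ α) {q : A → ℝ}
    (hq : ∀ x, 0 < q x) :
    exceedBound C α (arrowMatrix t *ᵥ q) + exceedBound C α (arrowMatrix b *ᵥ q) =
      exceedBound C α q := by
  obtain ⟨hw, hl⟩ := ht.2.winner_eq_loser_and_loser_eq_winner hb.2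
  have htq : (arrowMatrix t *ᵥ q) α = q α := by
    rw [arrowMatrix_mulVec_apply, if_neg (hl ▸ hbα.symm), add_zero]
  have hbq : (arrowMatrix b *ᵥ q) α = q α := by
    rw [arrowMatrix_mulVec_apply, if_neg (hw ▸ htα.symm), add_zero]
  rw [exceedBound, exceedBound, exceedBound, htq, hbq, ← mul_add,
    volume_lambda_top_add_bottom hw hl hq]

noncomputable def exceedSet (C : ℝ) (α : A) (n : ℕ) (π : PermPair A) (q : A → ℝ) :
    Set (A → ℝ) :=
  ⋃ L ∈ {L : List (Arrow A) | ChainFrom π L ∧ L.length ≤ n ∧ (∀ a ∈ L, a.winner ≠ α) ∧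
    C < (pathMatrix ⟨π, L⟩ *ᵥ q) α}, lamSet q ⟨π, L⟩

lemma exceedSet_mono (π : PermPair A) (q : A → ℝ) :
    Monotone fun n => exceedSet C α n π q :=
  fun _ _ hnm => Set.biUnion_subset_biUnion_left fun _ ⟨hc, hlen, hw, hC⟩ =>
    ⟨hc, hlen.trans hnm, hw, hC⟩

lemma exceedSet_subset_lambda (n : ℕ) (π : PermPair A) (q : A → ℝ) :
    exceedSet C α n π q ⊆ Lambda q :=
  Set.iUnion₂_subset fun _ _ => lamSet_subset_lambda q _

lemma exceedSet_zero {π : PermPair A} {q : A → ℝ} (h : q α ≤ C) : exceedSet C α 0 π q = ∅ := by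
  refine Set.eq_empty_of_subset_empty (Set.iUnion₂_subset ?_)
  rintro (_ | ⟨a, L⟩) ⟨-, hlen, -, hC⟩
  · exact absurd hC (by simpa [pathMatrix] using h)
  · simp at hlen

lemma exceedSet_succ_subset {n : ℕ} {π : PermPair A} {q : A → ℝ} (h : q α ≤ C) :
    exceedSet C α (n + 1) π q ⊆
      (⋃ a ∈ topArrows π ∩ {a | a.winner ≠ α},
        (fun v => (arrowMatrix a)ᵀ *ᵥ v) '' exceedSet C α n a.dst (arrowMatrix a *ᵥ q)) ∪
      (⋃ a ∈ bottomArrows π ∩ {a | a.winner ≠ α},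
        (fun v => (arrowMatrix a)ᵀ *ᵥ v) '' exceedSet C α n a.dst (arrowMatrix a *ᵥ q)) := by
  refine Set.iUnion₂_subset ?_
  rintro (_ | ⟨a, L⟩) ⟨hchain, hlen, hwin, hC⟩
  · exact absurd hC (by simpa [pathMatrix] using h)
  obtain ⟨rfl, hstep, hchain⟩ := hchain
  have hα : a.winner ≠ α := hwin a List.mem_cons_self
  have hbranch : lamSet q ⟨a.src, a :: L⟩ ⊆
      (fun v => (arrowMatrix a)ᵀ *ᵥ v) '' exceedSet C α n a.dst (arrowMatrix a *ᵥ q) := by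
    rw [lamSet_cons q _ a.dst]
    refine Set.image_mono fun x hx => Set.mem_biUnion ⟨hchain, by simpa using hlen,
      fun b hb => hwin b (List.mem_cons_of_mem a hb), ?_⟩ hx
    rwa [pathMatrix_cons _ a.dst, ← Matrix.mulVec_mulVec] at hC
  intro x hx
  rcases hstep with htop | hbot
  · exact Or.inl (Set.mem_biUnion ⟨⟨rfl, htop⟩, hα⟩ (hbranch hx))
  · exact Or.inr (Set.mem_biUnion ⟨⟨rfl, hbot⟩, hα⟩ (hbranch hx))

lemma volume_exceedSet_le_of_lt (hC : 0 < C) {q : A → ℝ} (h : C < q α) (n : ℕ)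
    (π : PermPair A) : volume (exceedSet C α n π q) ≤ exceedBound C α q :=
  (measure_mono (exceedSet_subset_lambda n π q)).trans
    (le_mul_of_one_le_left' (ENNReal.one_le_ofReal.2 ((one_le_div hC).2 h.le)))

lemma volume_exceedSet_le (hC : 0 < C) (n : ℕ) (π : PermPair A) {q : A → ℝ}
    (hq : ∀ x, 0 < q x) : volume (exceedSet C α n π q) ≤ exceedBound C α q := by
  induction n generalizing π q with
  | zero =>
    rcases lt_or_ge C (q α) with h | h
    · exact volume_exceedSet_le_of_lt hC h 0 π
    · simp [exceedSet_zero h]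
  | succ n ih =>
    rcases lt_or_ge C (q α) with h | h
    · exact volume_exceedSet_le_of_lt hC h _ π
    have hbranch : ∀ a ∈ topArrows π ∪ bottomArrows π,
        volume ((fun v => (arrowMatrix a)ᵀ *ᵥ v) '' exceedSet C α n a.dst (arrowMatrix a *ᵥ q))
          ≤ exceedBound C α (arrowMatrix a *ᵥ q) := by
      intro a ha
      have hwl : a.winner ≠ a.loser := by
        rcases ha with ⟨-, h⟩ | ⟨-, h⟩
        exacts [IsStep.winner_ne_loser (Or.inl h), IsStep.winner_ne_loser (Or.inr h)]
      rw [volume_image_transpose_arrowMatrix hwl]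
      exact ih a.dst (arrowMatrix_mulVec_pos a hq)
    refine (measure_mono (exceedSet_succ_subset h)).trans
      (measure_biUnion_union_biUnion_le _
        ((topArrows_subsingleton π).anti Set.inter_subset_left)
        ((bottomArrows_subsingleton π).anti Set.inter_subset_left) ?_ ?_)
    · rintro a (⟨ha, -⟩ | ⟨ha, -⟩) <;>
        refine (hbranch a ?_).trans (exceedBound_arrowMatrix_mulVec_le hC.le a hq)
      exacts [Or.inl ha, Or.inr ha]
    · rintro t ⟨ht, htα⟩ b ⟨hb, hbα⟩
      exact (add_le_add (hbranch t (Or.inl ht)) (hbranch b (Or.inr hb))).trans_eq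
        (exceedBound_top_add_bottom ht hb htα hbα hq)

lemma famProb_le {q : A → ℝ} (hq : ∀ a, 0 < q a) {Γ : Set (RPath A)} {c : ℝ} (hc : 0 ≤ c)
    (h : volume (⋃ p ∈ Γ, lamSet q p) ≤ ENNReal.ofReal c * volume (Lambda q)) :
    famProb q Γ ≤ c := by
  refine div_le_of_le_mul₀ ENNReal.toReal_nonneg hc ?_
  have := ENNReal.toReal_mono
    (ENNReal.mul_ne_top ENNReal.ofReal_ne_top (volume_lambda_lt_top hq).ne) h
  rwa [ENNReal.toReal_mul, ENNReal.toReal_ofReal hc] at this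

end Exceed

lemma finite_span_nat_inter_Iic {ι : Type*} [Fintype ι] {q : ι → ℝ} (hq : ∀ i, 0 < q i)
    (M : ℝ) :
    ((Submodule.span ℕ (Set.range q) : Set ℝ) ∩ Set.Iic M).Finite := by
  classical
  refine ((Set.finite_Iic fun i => ⌊M / q i⌋₊).image fun c => ∑ i, c i • q i).subset ?_
  rintro v ⟨hv, hvM⟩
  obtain ⟨c, rfl⟩ := (Submodule.mem_span_range_iff_exists_fun ℕ).1 hv
  refine ⟨c, fun i => Nat.le_floor ?_, rfl⟩
  rw [le_div_iff₀ (hq i), ← nsmul_eq_mul]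
  exact (Finset.single_le_sum (fun j _ => nsmul_nonneg (hq j).le _) (Finset.mem_univ i)).trans
    hvM

lemma exists_gt_forall_lt_of_mem_span_nat {ι : Type*} [Fintype ι] {q : ι → ℝ}
    (hq : ∀ i, 0 < q i) (x : ℝ) :
    ∃ y, x < y ∧ ∀ v ∈ Submodule.span ℕ (Set.range q), x < v → y < v := by
  have hS : ((Submodule.span ℕ (Set.range q) : Set ℝ) ∩ Set.Ioc x (x + 1)).Finite :=
    (finite_span_nat_inter_Iic hq (x + 1)).subset
      (Set.inter_subset_inter_right _ Set.Ioc_subset_Iic_self)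
  have hnear : ∀ᶠ y in 𝓝[>] x, x < y ∧ y < x + 1 ∧
      ∀ v ∈ (Submodule.span ℕ (Set.range q) : Set ℝ) ∩ Set.Ioc x (x + 1), y < v :=
    eventually_mem_nhdsWithin.and (nhdsWithin_le_nhds ((eventually_lt_nhds (lt_add_one x)).and
      (hS.eventually_all.2 fun v hv => eventually_lt_nhds hv.2.1)))
  obtain ⟨y, hxy, hy1, hyS⟩ := hnear.exists
  refine ⟨y, hxy, fun v hv hxv => ?_⟩
  rcases le_or_gt v (x + 1) with h | h
  · exact hyS v ⟨hv, hxv, h⟩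
  · exact hy1.trans h

variable [DecidableEq A]

theorem kerckhoff_estimate_general
    (R : Set (PermPair A))
    (T : ℝ) (hT : 0 < T) (q : A → ℝ) (hq : ∀ a, 0 < q a)
    (α : A) (π : PermPair A) :
    pathProb R q π (fun γ =>
        (∀ arr ∈ γ.arrows, arr.winner ≠ α) ∧
        T * q α < ((pathMatrix γ).mulVec q) α)
      < T⁻¹ := by
  obtain ⟨C, hTC, hgap⟩ := exists_gt_forall_lt_of_mem_span_nat hq (T * q α)
  have hC : 0 < C := (mul_pos hT (hq α)).trans hTC
  have hvol : volume (⋃ n, exceedSet C α n π q) ≤ exceedBound C α q := by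
    rw [(exceedSet_mono π q).measure_iUnion]
    exact iSup_le fun n => volume_exceedSet_le hC n π hq
  refine (famProb_le hq (div_nonneg (hq α).le hC.le) ((measure_mono ?_).trans hvol)).trans_lt ?_
  · refine Set.iUnion₂_subset ?_
    rintro ⟨π, L⟩ ⟨⟨-, hchain⟩, rfl, hwin, hgrowth⟩ x hx
    have hspan := pathMatrix_mulVec_mem_span ⟨π, L⟩ (v := q)
      (fun y => Submodule.subset_span ⟨y, rfl⟩) α
    exact Set.mem_iUnion.2 ⟨L.length,
      Set.mem_biUnion ⟨hchain, le_rfl, hwin, hgap _ hspan hgrowth⟩ hx⟩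
  · rw [div_lt_iff₀ hC, ← div_eq_inv_mul, lt_div_iff₀ hT, mul_comm]
    exact hTC

/-- Kerckhoff's estimate: along paths where `α` never wins, the coordinate `q_α`
is multiplied by more than `T` with probability less than `T⁻¹`. -/
theorem kerckhoff_estimate (hd : 2 ≤ Fintype.card A)
    (R : Set (PermPair A)) (hR : IsRauzyClass R)
    (T : ℝ) (hT : 0 < T) (q : A → ℝ) (hq : ∀ a, 0 < q a)
    (α : A) (π : PermPair A) (hπ : π ∈ R) :
    pathProb R q π (fun γ =>
        (∀ arr ∈ γ.arrows, arr.winner ≠ α) ∧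
        T * q α < ((pathMatrix γ).mulVec q) α)
      < T⁻¹ :=
  kerckhoff_estimate_general R T hT q hq α π

end Rauzy
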